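/- Let z, w ∈ U and 0 < α ≤ 1. Let p_α be the Pick function p_α(u) = 4αu/(1 − u + √((1 − u)² + 4αu))² (branch of the square root equal to 1 at u = 0), and for a ∈ U let B_a(ζ) = ((1 − conj(a))/(1 − a)) · (ζ − a)/(1 − ζ conj(a)). Then the composition φ* = B_w^{−1} ∘ p_α ∘ B_z is a holomorphic injective map of U into U with φ*(z) = w, φ* has angular limit 1 at the boundary point 1 and finite angular derivative β = (1/√α) · ((1 − |z|²)/|1 − z|²) · (|1 − w|²/(1 − |w|²)) at 1, and |φ*'(z)| = α(1 − |w|²)/(1 − |z|²) = (1/β²) · ((1 − |z|²)/|1 − z|⁴) · (|1 − w|⁴/(1 − |w|²)); i.e. φ* attains equality in the lower Schwarz–Pick estimate of Theorem 1. -/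

import Mathlib

/-!
`B_z` and `B_w⁻¹` are disk automorphisms fixing `1`; their difference quotients at `1` converge
(without any angular restriction) to `(1 - |z|²)/|1 - z|²` and `|1 - w|²/(1 - |w|²)`.
For the Pick function write `p_α = (s - (1 - u))/(s + (1 - u))` with `s² = (1 - u)² + 4αu`.
Both `s²` and `(s/(1 - u))² = (1 - α) + α ((1 + u)/(1 - u))²` avoid `(-∞, 0]` on the disk, so by
connectedness `Re s > 0` and `Re (s/(1 - u)) > 0`. The second gives `|p_α| < 1`; the first forces
`s → 2√α` at `1`, whence `(p_α(u) - 1)/(u - 1) = 2/(s + 1 - u) → 1/√α`. These boundary slopes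
multiply under composition, and at `z` the chain rule gives `|φ'(z)| = (1 - |w|²) · α/(1 - |z|²)`.
-/

open Complex Set Filter Finset

noncomputable section

/-- The open unit disk in the complex plane. -/
def unitDisk : Set ℂ := {z : ℂ | ‖z‖ < 1}

/-- A Stolz angle at a boundary point `ζ` with opening parameter `k > 1`. -/
def stolzAngle (ζ : ℂ) (k : ℝ) : Set ℂ :=
  {z | z ∈ unitDisk ∧ ‖z - ζ‖ < k * (1 - ‖z‖)}

/-- `φ` has angular limit `L` at the boundary point `ζ`: `φ z → L` as `z → ζ`
within every Stolz angle at `ζ`. -/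
def HasAngularLimit (φ : ℂ → ℂ) (ζ L : ℂ) : Prop :=
  ∀ k : ℝ, 1 < k → Tendsto φ (nhdsWithin ζ (stolzAngle ζ k)) (nhds L)

/-- `φ` has finite angular limit `L` and finite angular derivative `β` at the
boundary point `ζ`. -/
def HasAngularDerivAt (φ : ℂ → ℂ) (ζ L β : ℂ) : Prop :=
  HasAngularLimit φ ζ L ∧
  ∀ k : ℝ, 1 < k →
    Tendsto (fun z => (φ z - L) / (z - ζ)) (nhdsWithin ζ (stolzAngle ζ k)) (nhds β)

open ComplexConjugate Topology

lemma unitDisk_eq_ball : unitDisk = Metric.ball 0 1 := by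
  ext u
  simp [unitDisk]

lemma isOpen_unitDisk : IsOpen unitDisk := unitDisk_eq_ball ▸ Metric.isOpen_ball

lemma convex_unitDisk : Convex ℝ unitDisk := unitDisk_eq_ball ▸ convex_ball 0 1

lemma zero_mem_unitDisk : (0 : ℂ) ∈ unitDisk := by simp [unitDisk]

lemma one_notMem_unitDisk : (1 : ℂ) ∉ unitDisk := by simp [unitDisk]

lemma sub_one_ne_zero_of_mem_unitDisk {u : ℂ} (hu : u ∈ unitDisk) : u - 1 ≠ 0 :=
  sub_ne_zero.2 (ne_of_mem_of_not_mem hu one_notMem_unitDisk)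

lemma one_sub_ne_zero_of_mem_unitDisk {u : ℂ} (hu : u ∈ unitDisk) : 1 - u ≠ 0 :=
  sub_ne_zero.2 (ne_of_mem_of_not_mem hu one_notMem_unitDisk).symm

lemma conj_mem_unitDisk {u : ℂ} (hu : u ∈ unitDisk) : conj u ∈ unitDisk := by
  simpa [unitDisk] using hu

lemma mul_mem_unitDisk {u v : ℂ} (hu : u ∈ unitDisk) (hv : v ∈ unitDisk) : u * v ∈ unitDisk := by
  simp only [unitDisk, mem_ofPred_eq, norm_mul] at *
  exact mul_lt_one_of_nonneg_of_lt_one_left (norm_nonneg u) hu hv.le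

lemma one_sub_mul_conj_ne_zero {u a : ℂ} (hu : u ∈ unitDisk) (ha : a ∈ unitDisk) :
    1 - u * conj a ≠ 0 :=
  one_sub_ne_zero_of_mem_unitDisk (mul_mem_unitDisk hu (conj_mem_unitDisk ha))

lemma normSq_lt_one_of_mem_unitDisk {u : ℂ} (hu : u ∈ unitDisk) : normSq u < 1 := by
  rw [normSq_eq_norm_sq]
  exact pow_lt_one₀ (norm_nonneg u) hu two_ne_zero

lemma one_sub_sq_norm_pos {u : ℂ} (hu : u ∈ unitDisk) : 0 < 1 - ‖u‖ ^ 2 :=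
  sub_pos.2 (pow_lt_one₀ (norm_nonneg u) hu two_ne_zero)

lemma re_one_sub_pos {u : ℂ} (hu : u ∈ unitDisk) : 0 < (1 - u).re := by
  have : u.re < 1 := (re_le_norm u).trans_lt hu
  simp only [sub_re, one_re]
  linarith

lemma norm_div_lt_one_of_normSq_lt {x y : ℂ} (h : normSq x < normSq y) : ‖x / y‖ < 1 := by
  have hy : y ≠ 0 := by
    rintro rfl
    simp only [map_zero] at h
    exact (normSq_nonneg x).not_gt h
  rw [norm_div, div_lt_one (norm_pos_iff.2 hy)]
  simpa only [normSq_eq_norm_sq, sq_lt_sq₀ (norm_nonneg _) (norm_nonneg _)] using h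

lemma norm_one_sub_conj (a : ℂ) : ‖1 - conj a‖ = ‖1 - a‖ := by
  rw [show 1 - conj a = conj (1 - a) by simp, norm_conj]

lemma one_sub_mul_one_sub_conj (a : ℂ) : (1 - a) * (1 - conj a) = ((‖1 - a‖ ^ 2 : ℝ) : ℂ) := by
  rw [show 1 - conj a = conj (1 - a) by simp, mul_conj']
  push_cast
  ring

lemma one_sub_mul_conj_self (a : ℂ) : 1 - a * conj a = ((1 - ‖a‖ ^ 2 : ℝ) : ℂ) := by
  rw [mul_conj']
  push_cast
  ring

section BoundarySlope

variable {S : Set ℂ} {ζ L β : ℂ}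

lemma tendsto_of_tendsto_slope {f : ℂ → ℂ} (hζ : ζ ∉ S)
    (h : Tendsto (fun u => (f u - L) / (u - ζ)) (𝓝[S] ζ) (𝓝 β)) : Tendsto f (𝓝[S] ζ) (𝓝 L) := by
  have hlin : Tendsto (fun u => L + (f u - L) / (u - ζ) * (u - ζ)) (𝓝[S] ζ) (𝓝 (L + β * 0)) :=
    tendsto_const_nhds.add (h.mul (tendsto_sub_nhds_zero_iff.2 nhdsWithin_le_nhds))
  rw [mul_zero, add_zero] at hlin
  refine hlin.congr' (eventually_nhdsWithin_of_forall fun u hu => ?_)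
  rw [div_mul_cancel₀ _ (sub_ne_zero.2 (ne_of_mem_of_not_mem hu hζ)), add_sub_cancel]

lemma tendsto_slope_comp {f g : ℂ → ℂ} {a b : ℂ} (hζ : ζ ∉ S) (hf : MapsTo f S S)
    (hf' : Tendsto (fun u => (f u - ζ) / (u - ζ)) (𝓝[S] ζ) (𝓝 a))
    (hg' : Tendsto (fun v => (g v - ζ) / (v - ζ)) (𝓝[S] ζ) (𝓝 b)) :
    Tendsto (fun u => (g (f u) - ζ) / (u - ζ)) (𝓝[S] ζ) (𝓝 (b * a)) := by
  have hfζ : Tendsto f (𝓝[S] ζ) (𝓝[S] ζ) :=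
    tendsto_nhdsWithin_iff.2 ⟨tendsto_of_tendsto_slope hζ hf',
      eventually_nhdsWithin_of_forall fun u hu => hf hu⟩
  refine ((hg'.comp hfζ).mul hf').congr' (eventually_nhdsWithin_of_forall fun u hu => ?_)
  exact div_mul_div_cancel₀ (sub_ne_zero.2 (ne_of_mem_of_not_mem (hf hu) hζ))

end BoundarySlope

lemma hasAngularDerivAt_of_tendsto_slope {φ : ℂ → ℂ} {ζ L β : ℂ} (hζ : ζ ∉ unitDisk)
    (h : Tendsto (fun u => (φ u - L) / (u - ζ)) (𝓝[unitDisk] ζ) (𝓝 β)) :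
    HasAngularDerivAt φ ζ L β := by
  have hstolz : ∀ k, 𝓝[stolzAngle ζ k] ζ ≤ 𝓝[unitDisk] ζ := fun k =>
    nhdsWithin_mono ζ fun u hu => hu.1
  exact ⟨fun k _ => (tendsto_of_tendsto_slope hζ h).mono_left (hstolz k),
    fun k _ => h.mono_left (hstolz k)⟩

lemma sq_mem_slitPlane {x : ℂ} (hx : 0 < x.re) : x ^ 2 ∈ slitPlane := by
  rw [mem_slitPlane_iff]
  by_cases him : x.im = 0
  · left
    simp [sq, him, hx]
  · right
    rw [sq, mul_im, mul_comm x.im, ← two_mul]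
    exact mul_ne_zero two_ne_zero (mul_ne_zero hx.ne' him)

lemma re_ne_zero_of_sq_mem_slitPlane {x : ℂ} (hx : x ^ 2 ∈ slitPlane) : x.re ≠ 0 := by
  intro h
  rw [mem_slitPlane_iff] at hx
  simp only [sq, mul_re, mul_im, h, mul_zero, zero_mul, zero_sub, add_zero] at hx
  rcases hx with hx | hx
  · linarith [mul_self_nonneg x.im]
  · exact hx rfl

lemma add_mul_mem_slitPlane {x : ℂ} {b c : ℝ} (hx : x ∈ slitPlane) (hb : 0 ≤ b) (hc : 0 < c) :
    (b : ℂ) + c * x ∈ slitPlane := by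
  rw [mem_slitPlane_iff] at hx ⊢
  simp only [add_re, ofReal_re, re_ofReal_mul, add_im, ofReal_im, im_ofReal_mul, zero_add]
  rcases hx with hx | hx
  · left; positivity
  · right; exact mul_ne_zero hc.ne' hx

lemma IsPreconnected.re_pos_of_sq_mem_slitPlane {X : Type*} [TopologicalSpace X] {S : Set X}
    (hS : IsPreconnected S) {g : X → ℂ} (hg : ContinuousOn g S)
    (hsq : ∀ x ∈ S, g x ^ 2 ∈ slitPlane) {a : X} (ha : a ∈ S) (hga : 0 < (g a).re)
    {x : X} (hx : x ∈ S) : 0 < (g x).re := by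
  by_contra! hneg
  obtain ⟨y, hy, hy0⟩ :=
    hS.intermediate_value hx ha (continuous_re.comp_continuousOn hg) ⟨hneg, hga.le⟩
  exact re_ne_zero_of_sq_mem_slitPlane (hsq y hy) hy0

lemma norm_sub_div_add_lt_one {x y : ℂ} (hy : y ≠ 0) (h : 0 < (x / y).re) :
    ‖(x - y) / (x + y)‖ < 1 := by
  have hxy : (x - y) / (x + y) = (x / y - 1) / (x / y + 1) := by
    rw [div_sub_one hy, div_add_one hy, div_div_div_cancel_right₀ hy]
  rw [hxy]
  refine norm_div_lt_one_of_normSq_lt ?_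
  simp only [normSq_apply, sub_re, add_re, sub_im, add_im, one_re, one_im]
  nlinarith

lemma tendsto_of_tendsto_sq_of_re_nonneg {ι : Type*} {l : Filter ι} {f : ι → ℂ} {c : ℝ}
    (hc : 0 < c) (hre : ∀ᶠ i in l, 0 ≤ (f i).re)
    (hsq : Tendsto (fun i => f i ^ 2) l (𝓝 ((c : ℂ) ^ 2))) :
    Tendsto f l (𝓝 c) := by
  rw [tendsto_iff_norm_sub_tendsto_zero] at hsq ⊢
  have hbound : Tendsto (fun i => ‖f i ^ 2 - c ^ 2‖ / c) l (𝓝 0) := by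
    simpa using hsq.div_const c
  refine squeeze_zero' (Eventually.of_forall fun _ => norm_nonneg _)
    (hre.mono fun i hi => ?_) hbound
  rw [le_div_iff₀ hc]
  have hplus : c ≤ ‖f i + c‖ := by
    simpa using (re_le_norm (f i + c)).trans' (by simp; linarith)
  calc ‖f i - c‖ * c ≤ ‖f i - c‖ * ‖f i + c‖ := by gcongr
    _ = ‖f i ^ 2 - c ^ 2‖ := by rw [← norm_mul]; ring_nf

/-- The disk automorphism `B_a`; it sends `a` to `0` and fixes `1`. -/
def diskAut (a ζ : ℂ) : ℂ := (1 - conj a) / (1 - a) * ((ζ - a) / (1 - ζ * conj a))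

def diskAutInv (a v : ℂ) : ℂ :=
  ((1 - a) * v + (1 - conj a) * a) / (1 - conj a + (1 - a) * conj a * v)

@[simp] lemma diskAut_self (a : ℂ) : diskAut a a = 0 := by simp [diskAut]

section DiskAut

variable {a : ℂ}

lemma mapsTo_diskAut (ha : a ∈ unitDisk) : MapsTo (diskAut a) unitDisk unitDisk := by
  intro u hu
  have key : normSq (1 - u * conj a) - normSq (u - a) = (1 - normSq a) * (1 - normSq u) := by
    simp only [normSq_apply, sub_re, sub_im, one_re, one_im, mul_re, mul_im, conj_re, conj_im]
    ring
  have hlt : normSq (u - a) < normSq (1 - u * conj a) := by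
    nlinarith [normSq_lt_one_of_mem_unitDisk hu, normSq_lt_one_of_mem_unitDisk ha]
  show ‖_‖ < 1
  rw [diskAut, norm_mul, norm_div, norm_one_sub_conj,
    div_self (norm_ne_zero_iff.2 (one_sub_ne_zero_of_mem_unitDisk ha)), one_mul]
  exact norm_div_lt_one_of_normSq_lt hlt

lemma injOn_diskAut (ha : a ∈ unitDisk) : InjOn (diskAut a) unitDisk := by
  intro u hu v hv huv
  have hc : (1 - conj a) / (1 - a) ≠ 0 :=
    div_ne_zero (one_sub_ne_zero_of_mem_unitDisk (conj_mem_unitDisk ha))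
      (one_sub_ne_zero_of_mem_unitDisk ha)
  have h := mul_left_cancel₀ hc huv
  rw [div_eq_div_iff (one_sub_mul_conj_ne_zero hu ha) (one_sub_mul_conj_ne_zero hv ha)] at h
  have h' : (u - v) * (1 - a * conj a) = 0 := by linear_combination h
  exact sub_eq_zero.1 ((mul_eq_zero.1 h').resolve_right (one_sub_mul_conj_ne_zero ha ha))

lemma normSq_lt_normSq_diskAutInv_denom (ha : a ∈ unitDisk) {v : ℂ} (hv : v ∈ unitDisk) :
    normSq ((1 - a) * v + (1 - conj a) * a) < normSq (1 - conj a + (1 - a) * conj a * v) := by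
  have key : normSq (1 - conj a + (1 - a) * conj a * v) - normSq ((1 - a) * v + (1 - conj a) * a)
      = normSq (1 - a) * ((1 - normSq a) * (1 - normSq v)) := by
    simp only [normSq_apply, sub_re, sub_im, add_re, add_im, one_re, one_im, mul_re, mul_im,
      conj_re, conj_im]
    ring
  have h1 : 0 < normSq (1 - a) := normSq_pos.2 (one_sub_ne_zero_of_mem_unitDisk ha)
  have h2 := normSq_lt_one_of_mem_unitDisk ha
  have h3 := normSq_lt_one_of_mem_unitDisk hv
  have : 0 < normSq (1 - a) * ((1 - normSq a) * (1 - normSq v)) := by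
    apply mul_pos h1; apply mul_pos <;> linarith
  linarith

lemma diskAutInv_denom_ne_zero (ha : a ∈ unitDisk) {v : ℂ} (hv : v ∈ unitDisk) :
    1 - conj a + (1 - a) * conj a * v ≠ 0 :=
  normSq_pos.1 ((normSq_nonneg _).trans_lt (normSq_lt_normSq_diskAutInv_denom ha hv))

lemma mapsTo_diskAutInv (ha : a ∈ unitDisk) : MapsTo (diskAutInv a) unitDisk unitDisk :=
  fun _ hv => norm_div_lt_one_of_normSq_lt (normSq_lt_normSq_diskAutInv_denom ha hv)

lemma diskAut_diskAutInv (ha : a ∈ unitDisk) {v : ℂ} (hv : v ∈ unitDisk) :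
    diskAut a (diskAutInv a v) = v := by
  have hD := diskAutInv_denom_ne_zero ha hv
  have h1a := one_sub_ne_zero_of_mem_unitDisk ha
  have h1a' := one_sub_ne_zero_of_mem_unitDisk (conj_mem_unitDisk ha)
  have haa := one_sub_mul_conj_ne_zero ha ha
  have hnum : diskAutInv a v - a
      = (1 - a) * (1 - a * conj a) * v / (1 - conj a + (1 - a) * conj a * v) := by
    rw [diskAutInv, div_sub' hD]; ring_nf
  have hden : 1 - diskAutInv a v * conj a
      = (1 - conj a) * (1 - a * conj a) / (1 - conj a + (1 - a) * conj a * v) := by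
    rw [diskAutInv, div_mul_eq_mul_div, one_sub_div hD]; ring_nf
  rw [diskAut, hnum, hden, div_div_div_cancel_right₀ hD, mul_right_comm _ _ v,
    mul_div_mul_right _ _ haa]
  field_simp

lemma injOn_diskAutInv (ha : a ∈ unitDisk) : InjOn (diskAutInv a) unitDisk :=
  LeftInvOn.injOn fun _ hv => diskAut_diskAutInv ha hv

lemma eqOn_diskAutInv {ψ : ℂ → ℂ} (ha : a ∈ unitDisk)
    (hψ : ∀ u ∈ unitDisk, ψ (diskAut a u) = u) : EqOn ψ (diskAutInv a) unitDisk := fun v hv => by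
  simpa only [diskAut_diskAutInv ha hv] using hψ _ (mapsTo_diskAutInv ha hv)

lemma diskAutInv_zero (ha : a ∈ unitDisk) : diskAutInv a 0 = a := by
  rw [diskAutInv, mul_zero, zero_add, mul_zero, add_zero,
    mul_div_cancel_left₀ a (one_sub_ne_zero_of_mem_unitDisk (conj_mem_unitDisk ha))]

lemma differentiableOn_diskAut (ha : a ∈ unitDisk) : DifferentiableOn ℂ (diskAut a) unitDisk :=
  fun _ hu => ((differentiableWithinAt_id.sub_const a).div
    ((differentiableWithinAt_id.mul_const (conj a)).const_sub 1)
    (one_sub_mul_conj_ne_zero hu ha)).const_mul ((1 - conj a) / (1 - a))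

lemma differentiableOn_diskAutInv (ha : a ∈ unitDisk) :
    DifferentiableOn ℂ (diskAutInv a) unitDisk :=
  fun _ hv => (((differentiableWithinAt_id.const_mul _).add_const _).div
    ((differentiableWithinAt_id.const_mul _).const_add _) (diskAutInv_denom_ne_zero ha hv))

lemma hasDerivAt_diskAut_self (ha : a ∈ unitDisk) :
    HasDerivAt (diskAut a) ((1 - conj a) / (1 - a) / ((1 - ‖a‖ ^ 2 : ℝ) : ℂ)) a := by
  have haa := one_sub_mul_conj_ne_zero ha ha
  have h := (((hasDerivAt_id a).sub_const a).div
    (((hasDerivAt_id a).mul_const (conj a)).const_sub 1) haa).const_mul ((1 - conj a) / (1 - a))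
  refine h.congr_deriv ?_
  simp only [id, sub_self, zero_mul, sub_zero, one_mul]
  rw [← one_sub_mul_conj_self]
  field_simp

lemma hasDerivAt_diskAutInv_zero (ha : a ∈ unitDisk) :
    HasDerivAt (diskAutInv a) ((1 - a) / (1 - conj a) * ((1 - ‖a‖ ^ 2 : ℝ) : ℂ)) 0 := by
  have hD := diskAutInv_denom_ne_zero ha zero_mem_unitDisk
  have h := ((((hasDerivAt_id (0 : ℂ)).const_mul (1 - a)).add_const ((1 - conj a) * a)).div
    (((hasDerivAt_id (0 : ℂ)).const_mul ((1 - a) * conj a)).const_add (1 - conj a)) hD)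
  refine h.congr_deriv ?_
  have := one_sub_ne_zero_of_mem_unitDisk (conj_mem_unitDisk ha)
  simp only [id, mul_zero, zero_add, add_zero, mul_one] at hD ⊢
  rw [← one_sub_mul_conj_self]
  field_simp

lemma tendsto_slope_diskAut (ha : a ∈ unitDisk) :
    Tendsto (fun ζ => (diskAut a ζ - 1) / (ζ - 1)) (𝓝[unitDisk] 1)
      (𝓝 (((1 - ‖a‖ ^ 2) / ‖1 - a‖ ^ 2 : ℝ) : ℂ)) := by
  have h1a := one_sub_ne_zero_of_mem_unitDisk ha
  have h1a' := one_sub_ne_zero_of_mem_unitDisk (conj_mem_unitDisk ha)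
  have hslope : EqOn (fun ζ => (diskAut a ζ - 1) / (ζ - 1))
      (fun ζ => (1 - a * conj a) / ((1 - a) * (1 - ζ * conj a))) unitDisk := fun ζ hζ => by
    have hζ1 := sub_one_ne_zero_of_mem_unitDisk hζ
    have hden := one_sub_mul_conj_ne_zero hζ ha
    simp only
    rw [diskAut, div_mul_div_comm, div_sub_one (mul_ne_zero h1a hden), div_div,
      div_eq_div_iff (mul_ne_zero (mul_ne_zero h1a hden) hζ1) (mul_ne_zero h1a hden)]
    ring
  have hcont : ContinuousAt (fun ζ => (1 - a * conj a) / ((1 - a) * (1 - ζ * conj a))) 1 :=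
    continuousAt_const.div (by fun_prop) (by simpa using mul_ne_zero h1a h1a')
  have hval : (1 - a * conj a) / ((1 - a) * (1 - 1 * conj a))
      = (((1 - ‖a‖ ^ 2) / ‖1 - a‖ ^ 2 : ℝ) : ℂ) := by
    rw [one_mul, one_sub_mul_one_sub_conj, one_sub_mul_conj_self, ofReal_div]
  rw [← hval]
  exact (hcont.tendsto.mono_left nhdsWithin_le_nhds).congr'
    (eventually_nhdsWithin_of_forall fun ζ hζ => (hslope hζ).symm)

lemma tendsto_slope_diskAutInv (ha : a ∈ unitDisk) :
    Tendsto (fun v => (diskAutInv a v - 1) / (v - 1)) (𝓝[unitDisk] 1)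
      (𝓝 ((‖1 - a‖ ^ 2 / (1 - ‖a‖ ^ 2) : ℝ) : ℂ)) := by
  have haa := one_sub_mul_conj_ne_zero ha ha
  have hslope : EqOn (fun v => (diskAutInv a v - 1) / (v - 1))
      (fun v => (1 - a) * (1 - conj a) / (1 - conj a + (1 - a) * conj a * v)) unitDisk :=
    fun v hv => by
      have hv1 := sub_one_ne_zero_of_mem_unitDisk hv
      have hD := diskAutInv_denom_ne_zero ha hv
      simp only
      rw [diskAutInv, div_sub_one hD, div_div, div_eq_div_iff (mul_ne_zero hD hv1) hD]
      ring
  have hcont : ContinuousAt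
      (fun v => (1 - a) * (1 - conj a) / (1 - conj a + (1 - a) * conj a * v)) 1 :=
    continuousAt_const.div (by fun_prop) (by convert haa using 1; ring)
  have hval : (1 - a) * (1 - conj a) / (1 - conj a + (1 - a) * conj a * 1)
      = ((‖1 - a‖ ^ 2 / (1 - ‖a‖ ^ 2) : ℝ) : ℂ) := by
    rw [one_sub_mul_one_sub_conj, ofReal_div, ← one_sub_mul_conj_self]
    ring
  rw [← hval]
  exact (hcont.tendsto.mono_left nhdsWithin_le_nhds).congr'
    (eventually_nhdsWithin_of_forall fun v hv => (hslope hv).symm)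

end DiskAut

lemma one_sub_sq_add_mem_slitPlane {α : ℝ} (hα0 : 0 ≤ α) (hα1 : α ≤ 1) {u : ℂ}
    (hu : u ∈ unitDisk) : (1 - u) ^ 2 + 4 * (α : ℂ) * u ∈ slitPlane := by
  have hu' : u.re ^ 2 + u.im ^ 2 < 1 := by
    simpa [normSq_apply, sq] using normSq_lt_one_of_mem_unitDisk hu
  rw [mem_slitPlane_iff]
  by_contra! h
  obtain ⟨hre, him⟩ := h
  simp only [sq, add_re, add_im, mul_re, mul_im, sub_re, sub_im, one_re, one_im, ofReal_re,
    ofReal_im, re_ofNat, im_ofNat] at hre him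
  have him' : u.im * (u.re - 1 + 2 * α) = 0 := by linarith
  rcases mul_eq_zero.1 him' with hy | hx
  · rw [hy] at hre hu'
    nlinarith [mul_nonneg hα0 (sq_nonneg (1 + u.re)),
      mul_nonneg (sub_nonneg.2 hα1) (sq_nonneg (1 - u.re))]
  · have : u.re = 1 - 2 * α := by linarith
    rw [this] at hre hu'
    nlinarith

lemma re_one_add_div_one_sub_pos {u : ℂ} (hu : u ∈ unitDisk) : 0 < ((1 + u) / (1 - u)).re := by
  have hu' : u.re ^ 2 + u.im ^ 2 < 1 := by
    simpa [normSq_apply, sq] using normSq_lt_one_of_mem_unitDisk hu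
  have hn : 0 < normSq (1 - u) := normSq_pos.2 (one_sub_ne_zero_of_mem_unitDisk hu)
  rw [div_re, ← add_div]
  apply div_pos _ hn
  simp only [add_re, add_im, sub_re, sub_im, one_re, one_im]
  nlinarith

lemma div_one_sub_sq_mem_slitPlane {α : ℝ} (hα0 : 0 < α) (hα1 : α ≤ 1) {u : ℂ}
    (hu : u ∈ unitDisk) : ((1 - u) ^ 2 + 4 * (α : ℂ) * u) / (1 - u) ^ 2 ∈ slitPlane := by
  have h1u := one_sub_ne_zero_of_mem_unitDisk hu
  have hkey : ((1 - u) ^ 2 + 4 * (α : ℂ) * u) / (1 - u) ^ 2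
      = ((1 - α : ℝ) : ℂ) + α * ((1 + u) / (1 - u)) ^ 2 := by
    field_simp
    push_cast
    ring
  rw [hkey]
  exact add_mul_mem_slitPlane (sq_mem_slitPlane (re_one_add_div_one_sub_pos hu))
    (sub_nonneg.2 hα1) hα0

structure IsPickRoot (α : ℝ) (s : ℂ → ℂ) : Prop where
  differentiableOn : DifferentiableOn ℂ s unitDisk
  map_zero : s 0 = 1
  sq_eq : ∀ u ∈ unitDisk, s u ^ 2 = (1 - u) ^ 2 + 4 * (α : ℂ) * u

/-- The Pick function `p_α`. -/
def pick (α : ℝ) (s : ℂ → ℂ) (u : ℂ) : ℂ := 4 * (α : ℂ) * u / (1 - u + s u) ^ 2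

namespace IsPickRoot

variable {α : ℝ} {s : ℂ → ℂ} (hs : IsPickRoot α s) {u : ℂ}
include hs

lemma re_pos (hα0 : 0 ≤ α) (hα1 : α ≤ 1) (hu : u ∈ unitDisk) : 0 < (s u).re :=
  convex_unitDisk.isPreconnected.re_pos_of_sq_mem_slitPlane hs.differentiableOn.continuousOn
    (fun v hv => hs.sq_eq v hv ▸ one_sub_sq_add_mem_slitPlane hα0 hα1 hv) zero_mem_unitDisk
    (by simp [hs.map_zero]) hu

lemma re_div_one_sub_pos (hα0 : 0 < α) (hα1 : α ≤ 1) (hu : u ∈ unitDisk) :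
    0 < (s u / (1 - u)).re := by
  refine convex_unitDisk.isPreconnected.re_pos_of_sq_mem_slitPlane
    (hs.differentiableOn.continuousOn.div (by fun_prop)
      fun v hv => one_sub_ne_zero_of_mem_unitDisk hv)
    (fun v hv => ?_) zero_mem_unitDisk (by simp [hs.map_zero]) hu
  rw [Pi.div_apply, div_pow, hs.sq_eq v hv]
  exact div_one_sub_sq_mem_slitPlane hα0 hα1 hv

lemma add_one_sub_ne_zero (hα0 : 0 ≤ α) (hα1 : α ≤ 1) (hu : u ∈ unitDisk) :
    s u + (1 - u) ≠ 0 := by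
  intro h
  have := congrArg re h
  rw [add_re, zero_re] at this
  linarith [hs.re_pos hα0 hα1 hu, re_one_sub_pos hu]

lemma pick_eq (hα0 : 0 ≤ α) (hα1 : α ≤ 1) (hu : u ∈ unitDisk) :
    pick α s u = (s u - (1 - u)) / (s u + (1 - u)) := by
  have h := hs.add_one_sub_ne_zero hα0 hα1 hu
  rw [pick, div_eq_div_iff (pow_ne_zero 2 (by rwa [add_comm])) h]
  linear_combination -(s u + (1 - u)) * hs.sq_eq u hu

lemma mapsTo_pick (hα0 : 0 < α) (hα1 : α ≤ 1) : MapsTo (pick α s) unitDisk unitDisk :=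
  fun u hu => by
    rw [hs.pick_eq hα0.le hα1 hu]
    exact norm_sub_div_add_lt_one (one_sub_ne_zero_of_mem_unitDisk hu)
      (hs.re_div_one_sub_pos hα0 hα1 hu)

lemma injOn_pick (hα0 : 0 < α) (hα1 : α ≤ 1) : InjOn (pick α s) unitDisk := by
  intro u hu v hv huv
  rw [hs.pick_eq hα0.le hα1 hu, hs.pick_eq hα0.le hα1 hv,
    div_eq_div_iff (hs.add_one_sub_ne_zero hα0.le hα1 hu) (hs.add_one_sub_ne_zero hα0.le hα1 hv)]
    at huv
  have h1 : s u * (1 - v) = s v * (1 - u) := by linear_combination huv / 2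
  have h2 : (4 * (α : ℂ)) * ((u - v) * (1 - u * v)) = 0 := by
    linear_combination (s u * (1 - v) + s v * (1 - u)) * h1 - (1 - v) ^ 2 * hs.sq_eq u hu
      + (1 - u) ^ 2 * hs.sq_eq v hv
  have h4α : 4 * (α : ℂ) ≠ 0 := mul_ne_zero (by norm_num) (ofReal_ne_zero.2 hα0.ne')
  rcases mul_eq_zero.1 ((mul_eq_zero.1 h2).resolve_left h4α) with h | h
  · exact sub_eq_zero.1 h
  · exact absurd h (one_sub_ne_zero_of_mem_unitDisk (mul_mem_unitDisk hu hv))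

lemma differentiableOn_pick (hα0 : 0 ≤ α) (hα1 : α ≤ 1) :
    DifferentiableOn ℂ (pick α s) unitDisk :=
  (differentiableOn_id.const_mul _).div
    ((((differentiableOn_const 1).sub differentiableOn_id).add hs.differentiableOn).pow 2)
    fun u hu => pow_ne_zero 2 (by rw [add_comm]; exact hs.add_one_sub_ne_zero hα0 hα1 hu)

lemma hasDerivAt_pick_zero : HasDerivAt (pick α s) α 0 := by
  have hs' : HasDerivAt s (deriv s 0) 0 := (hs.differentiableOn.differentiableAt
    (isOpen_unitDisk.mem_nhds zero_mem_unitDisk)).hasDerivAt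
  have h := ((hasDerivAt_id (0 : ℂ)).const_mul (4 * (α : ℂ))).div
    ((((hasDerivAt_id (0 : ℂ)).const_sub 1).add hs').pow 2) (by simp [hs.map_zero])
  refine h.congr_deriv ?_
  simp only [id, Pi.pow_apply, Pi.add_apply, hs.map_zero]
  ring

lemma tendsto_nhdsWithin_one (hα0 : 0 < α) (hα1 : α ≤ 1) :
    Tendsto s (𝓝[unitDisk] 1) (𝓝 ((2 * √α : ℝ) : ℂ)) := by
  refine tendsto_of_tendsto_sq_of_re_nonneg (by positivity)
    (eventually_nhdsWithin_of_forall fun u hu => (hs.re_pos hα0.le hα1 hu).le) ?_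
  have hq : Tendsto (fun u : ℂ => (1 - u) ^ 2 + 4 * (α : ℂ) * u) (𝓝[unitDisk] 1)
      (𝓝 (((2 * √α : ℝ) : ℂ) ^ 2)) := by
    have : ((2 * √α : ℝ) : ℂ) ^ 2 = (1 - 1) ^ 2 + 4 * (α : ℂ) * 1 := by
      rw [← ofReal_pow, mul_pow, Real.sq_sqrt hα0.le]
      push_cast
      ring
    rw [this]
    exact (Continuous.tendsto (by fun_prop) 1).mono_left nhdsWithin_le_nhds
  exact hq.congr' (eventually_nhdsWithin_of_forall fun u hu => (hs.sq_eq u hu).symm)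

lemma tendsto_slope_pick (hα0 : 0 < α) (hα1 : α ≤ 1) :
    Tendsto (fun u => (pick α s u - 1) / (u - 1)) (𝓝[unitDisk] 1) (𝓝 ((1 / √α : ℝ) : ℂ)) := by
  have hsqrt : ((2 * √α : ℝ) : ℂ) ≠ 0 := ofReal_ne_zero.2 (by positivity)
  have hlim : Tendsto (fun u => 2 / (s u + (1 - u))) (𝓝[unitDisk] 1)
      (𝓝 (2 / (((2 * √α : ℝ) : ℂ) + (1 - 1)))) :=
    tendsto_const_nhds.div ((hs.tendsto_nhdsWithin_one hα0 hα1).add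
      ((continuous_const.sub continuous_id).tendsto 1 |>.mono_left nhdsWithin_le_nhds))
      (by rwa [sub_self, add_zero])
  have hval : 2 / (((2 * √α : ℝ) : ℂ) + (1 - 1)) = ((1 / √α : ℝ) : ℂ) := by
    rw [sub_self, add_zero]
    push_cast
    field_simp
  rw [← hval]
  refine hlim.congr' (eventually_nhdsWithin_of_forall fun u hu => ?_)
  have h := hs.add_one_sub_ne_zero hα0.le hα1 hu
  show _ = (pick α s u - 1) / (u - 1)
  rw [hs.pick_eq hα0.le hα1 hu, div_sub_one h, div_div,
    div_eq_div_iff h (mul_ne_zero h (sub_one_ne_zero_of_mem_unitDisk hu))]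
  ring

end IsPickRoot

def extremalMap (z w : ℂ) (α : ℝ) (s : ℂ → ℂ) : ℂ → ℂ := diskAutInv w ∘ pick α s ∘ diskAut z

section ExtremalMap

variable {z w : ℂ} {α : ℝ} {s : ℂ → ℂ}

lemma extremalMap_self (hw : w ∈ unitDisk) : extremalMap z w α s z = w := by
  simp [extremalMap, pick, diskAutInv_zero hw]

lemma mapsTo_extremalMap (hz : z ∈ unitDisk) (hw : w ∈ unitDisk) (hα0 : 0 < α) (hα1 : α ≤ 1)
    (hs : IsPickRoot α s) : MapsTo (extremalMap z w α s) unitDisk unitDisk :=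
  (mapsTo_diskAutInv hw).comp ((hs.mapsTo_pick hα0 hα1).comp (mapsTo_diskAut hz))

lemma injOn_extremalMap (hz : z ∈ unitDisk) (hw : w ∈ unitDisk) (hα0 : 0 < α) (hα1 : α ≤ 1)
    (hs : IsPickRoot α s) : InjOn (extremalMap z w α s) unitDisk :=
  (injOn_diskAutInv hw).comp ((hs.injOn_pick hα0 hα1).comp (injOn_diskAut hz) (mapsTo_diskAut hz))
    ((hs.mapsTo_pick hα0 hα1).comp (mapsTo_diskAut hz))

lemma differentiableOn_extremalMap (hz : z ∈ unitDisk) (hw : w ∈ unitDisk) (hα0 : 0 < α)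
    (hα1 : α ≤ 1) (hs : IsPickRoot α s) : DifferentiableOn ℂ (extremalMap z w α s) unitDisk :=
  (differentiableOn_diskAutInv hw).comp ((hs.differentiableOn_pick hα0.le hα1).comp
    (differentiableOn_diskAut hz) (mapsTo_diskAut hz))
    ((hs.mapsTo_pick hα0 hα1).comp (mapsTo_diskAut hz))

lemma tendsto_slope_extremalMap (hz : z ∈ unitDisk) (hw : w ∈ unitDisk) (hα0 : 0 < α)
    (hα1 : α ≤ 1) (hs : IsPickRoot α s) :
    Tendsto (fun u => (extremalMap z w α s u - 1) / (u - 1)) (𝓝[unitDisk] 1)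
      (𝓝 ((1 / √α * ((1 - ‖z‖ ^ 2) / ‖1 - z‖ ^ 2) * (‖1 - w‖ ^ 2 / (1 - ‖w‖ ^ 2)) : ℝ) : ℂ)) := by
  have h := tendsto_slope_comp (f := pick α s ∘ diskAut z) (g := diskAutInv w)
    one_notMem_unitDisk ((hs.mapsTo_pick hα0 hα1).comp (mapsTo_diskAut hz))
    (tendsto_slope_comp (f := diskAut z) (g := pick α s) one_notMem_unitDisk
      (mapsTo_diskAut hz) (tendsto_slope_diskAut hz) (hs.tendsto_slope_pick hα0 hα1))
    (tendsto_slope_diskAutInv hw)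
  have hprod : ((1 / √α * ((1 - ‖z‖ ^ 2) / ‖1 - z‖ ^ 2) * (‖1 - w‖ ^ 2 / (1 - ‖w‖ ^ 2)) : ℝ) : ℂ)
      = ((‖1 - w‖ ^ 2 / (1 - ‖w‖ ^ 2) : ℝ) : ℂ) *
        (((1 / √α : ℝ) : ℂ) * (((1 - ‖z‖ ^ 2) / ‖1 - z‖ ^ 2 : ℝ) : ℂ)) := by
    push_cast
    ring
  rwa [hprod]

lemma norm_deriv_extremalMap (hz : z ∈ unitDisk) (hw : w ∈ unitDisk) (hα0 : 0 < α)
    (hs : IsPickRoot α s) :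
    ‖deriv (extremalMap z w α s) z‖ = α * (1 - ‖w‖ ^ 2) / (1 - ‖z‖ ^ 2) := by
  have hderiv := (hasDerivAt_diskAutInv_zero hw).comp_of_eq z
    (hs.hasDerivAt_pick_zero.comp_of_eq z (hasDerivAt_diskAut_self hz) (diskAut_self z).symm)
    (by simp [pick])
  have h1w := norm_ne_zero_iff.2 (one_sub_ne_zero_of_mem_unitDisk hw)
  have h1z := norm_ne_zero_iff.2 (one_sub_ne_zero_of_mem_unitDisk hz)
  rw [extremalMap, hderiv.deriv]
  simp only [norm_mul, norm_div, norm_one_sub_conj, norm_real, Real.norm_of_nonneg hα0.le,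
    Real.norm_of_nonneg (one_sub_sq_norm_pos hw).le,
    Real.norm_of_nonneg (one_sub_sq_norm_pos hz).le, div_self h1w, div_self h1z]
  ring

end ExtremalMap

theorem extremal_function_one_boundary_point_general
    (z w : ℂ) (hz : z ∈ unitDisk) (hw : w ∈ unitDisk)
    (α : ℝ) (hα0 : 0 < α) (hα1 : α ≤ 1)
    (s : ℂ → ℂ) (hs : DifferentiableOn ℂ s unitDisk) (hs0 : s 0 = 1)
    (hssq : ∀ u ∈ unitDisk, (s u) ^ 2 = (1 - u) ^ 2 + 4 * (α : ℂ) * u)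
    (p : ℂ → ℂ) (hp : ∀ u : ℂ, p u = 4 * (α : ℂ) * u / (1 - u + s u) ^ 2)
    (Bz : ℂ → ℂ)
    (hBz : ∀ ζ : ℂ, Bz ζ =
      ((1 - (starRingEnd ℂ) z) / (1 - z)) * ((ζ - z) / (1 - ζ * (starRingEnd ℂ) z)))
    (Bw : ℂ → ℂ)
    (hBw : ∀ ζ : ℂ, Bw ζ =
      ((1 - (starRingEnd ℂ) w) / (1 - w)) * ((ζ - w) / (1 - ζ * (starRingEnd ℂ) w)))
    (ψ : ℂ → ℂ)
    (hψ1 : ∀ u ∈ unitDisk, ψ (Bw u) = u)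
    (φ : ℂ → ℂ) (hφ : ∀ u : ℂ, φ u = ψ (p (Bz u)))
    (β : ℝ)
    (hβ : β = (1 / Real.sqrt α) *
      ((1 - ‖z‖ ^ 2) / ‖1 - z‖ ^ 2) *
      (‖1 - w‖ ^ 2 / (1 - ‖w‖ ^ 2))) :
    DifferentiableOn ℂ φ unitDisk ∧
    InjOn φ unitDisk ∧
    MapsTo φ unitDisk unitDisk ∧
    φ z = w ∧
    HasAngularDerivAt φ 1 1 (β : ℂ) ∧
    ‖deriv φ z‖ = α * (1 - ‖w‖ ^ 2) / (1 - ‖z‖ ^ 2) ∧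
    ‖deriv φ z‖ =
      (1 / β ^ 2) * ((1 - ‖z‖ ^ 2) / ‖1 - z‖ ^ 4) *
        (‖1 - w‖ ^ 4 / (1 - ‖w‖ ^ 2)) := by
  obtain rfl : Bz = diskAut z := funext hBz
  obtain rfl : Bw = diskAut w := funext hBw
  obtain rfl : p = pick α s := funext hp
  have hpick : IsPickRoot α s := ⟨hs, hs0, hssq⟩
  have hφ' : EqOn (extremalMap z w α s) φ unitDisk := fun u hu => by
    rw [hφ, eqOn_diskAutInv hw hψ1 ((hpick.mapsTo_pick hα0 hα1) (mapsTo_diskAut hz hu))]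
    rfl
  have hderiv : ‖deriv φ z‖ = α * (1 - ‖w‖ ^ 2) / (1 - ‖z‖ ^ 2) := by
    rw [← (hφ'.eventuallyEq_of_mem (isOpen_unitDisk.mem_nhds hz)).deriv_eq]
    exact norm_deriv_extremalMap hz hw hα0 hpick
  refine ⟨(differentiableOn_extremalMap hz hw hα0 hα1 hpick).congr fun u hu => (hφ' hu).symm,
    (injOn_extremalMap hz hw hα0 hα1 hpick).congr hφ',
    (mapsTo_extremalMap hz hw hα0 hα1 hpick).congr hφ', hφ' hz ▸ extremalMap_self hw,
    hasAngularDerivAt_of_tendsto_slope one_notMem_unitDisk ?_, hderiv, ?_⟩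
  · exact hβ ▸ (tendsto_slope_extremalMap hz hw hα0 hα1 hpick).congr'
      (eventually_nhdsWithin_of_forall fun u hu => by rw [hφ' hu])
  · have := (one_sub_sq_norm_pos hw).ne'
    have := (one_sub_sq_norm_pos hz).ne'
    have := norm_ne_zero_iff.2 (one_sub_ne_zero_of_mem_unitDisk hw)
    have := norm_ne_zero_iff.2 (one_sub_ne_zero_of_mem_unitDisk hz)
    rw [hderiv, hβ, mul_pow, mul_pow, div_pow, div_pow, div_pow, one_pow, Real.sq_sqrt hα0.le]
    field_simp

/-- **The extremal function for Theorem 1.** For `z, w ∈ U` and `0 < α ≤ 1`,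
the composition `φ* = B_w⁻¹ ∘ p_α ∘ B_z` (where `p_α` is the Pick function and
`B_a(ζ) = ((1 − conj a)/(1 − a))·(ζ − a)/(1 − ζ conj a)`, and `ψ` is the
inverse of `B_w` on `U`) is an injective holomorphic self-map of `U` with
`φ*(z) = w`, angular limit `1` and finite angular derivative
`β = (1/√α)·((1 − |z|²)/|1 − z|²)·(|1 − w|²/(1 − |w|²))` at the boundary
point `1`, and
`|φ*'(z)| = α(1 − |w|²)/(1 − |z|²) = (1/β²)·((1 − |z|²)/|1 − z|⁴)·(|1 − w|⁴/(1 − |w|²))`;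
i.e. `φ*` attains equality in the lower Schwarz–Pick estimate. -/
theorem extremal_function_one_boundary_point
    (z w : ℂ) (hz : z ∈ unitDisk) (hw : w ∈ unitDisk)
    (α : ℝ) (hα0 : 0 < α) (hα1 : α ≤ 1)
    (s : ℂ → ℂ) (hs : DifferentiableOn ℂ s unitDisk) (hs0 : s 0 = 1)
    (hssq : ∀ u ∈ unitDisk, (s u) ^ 2 = (1 - u) ^ 2 + 4 * (α : ℂ) * u)
    (p : ℂ → ℂ) (hp : ∀ u : ℂ, p u = 4 * (α : ℂ) * u / (1 - u + s u) ^ 2)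
    (Bz : ℂ → ℂ)
    (hBz : ∀ ζ : ℂ, Bz ζ =
      ((1 - (starRingEnd ℂ) z) / (1 - z)) * ((ζ - z) / (1 - ζ * (starRingEnd ℂ) z)))
    (Bw : ℂ → ℂ)
    (hBw : ∀ ζ : ℂ, Bw ζ =
      ((1 - (starRingEnd ℂ) w) / (1 - w)) * ((ζ - w) / (1 - ζ * (starRingEnd ℂ) w)))
    (ψ : ℂ → ℂ)
    (hψ1 : ∀ u ∈ unitDisk, ψ (Bw u) = u)
    (hψ2 : ∀ u ∈ unitDisk, Bw (ψ u) = u)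
    (φ : ℂ → ℂ) (hφ : ∀ u : ℂ, φ u = ψ (p (Bz u)))
    (β : ℝ)
    (hβ : β = (1 / Real.sqrt α) *
      ((1 - ‖z‖ ^ 2) / ‖1 - z‖ ^ 2) *
      (‖1 - w‖ ^ 2 / (1 - ‖w‖ ^ 2))) :
    DifferentiableOn ℂ φ unitDisk ∧
    InjOn φ unitDisk ∧
    MapsTo φ unitDisk unitDisk ∧
    φ z = w ∧
    HasAngularDerivAt φ 1 1 (β : ℂ) ∧
    ‖deriv φ z‖ = α * (1 - ‖w‖ ^ 2) / (1 - ‖z‖ ^ 2) ∧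
    ‖deriv φ z‖ =
      (1 / β ^ 2) * ((1 - ‖z‖ ^ 2) / ‖1 - z‖ ^ 4) *
        (‖1 - w‖ ^ 4 / (1 - ‖w‖ ^ 2)) :=
  extremal_function_one_boundary_point_general z w hz hw α hα0 hα1 s hs hs0 hssq p hp Bz hBz Bw hBw
    ψ hψ1 φ hφ β hβ
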